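/- arXiv:1305.0120 — 2 statements merged into one kernel-verified Lean document; each statement's English description precedes it below -/
import Mathlib

section
/- Let T be an interval exchange transformation on [ℓ,r) with translation values α_1,…,α_s, and suppose T is minimal. For every N > 0 there exists ε > 0 such that for every z in [ℓ,r) and every n > 0, if |T^n(z) − z| < ε then n ≥ N. -/
open Set

/-- An interval exchange transformation on `[l, r)` exchanging `s` half-open
intervals with boundaries `γ 0 = l < γ 1 < … < γ s = r`, translation values `α`,
and permutation `π` (ordering of the image intervals). -/
structure IET (s : ℕ) where
  l : ℝ
  r : ℝ
  hlr : l < r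
  γ : Fin (s + 1) → ℝ
  γ_mono : StrictMono γ
  γ_first : γ 0 = l
  γ_last : γ (Fin.last s) = r
  α : Fin s → ℝ
  π : Equiv.Perm (Fin s)
  T : ℝ → ℝ
  Tinv : ℝ → ℝ
  hT : ∀ i : Fin s, ∀ x ∈ Ico (γ i.castSucc) (γ i.succ), T x = x + α i
  hmaps : MapsTo T (Ico l r) (Ico l r)
  hinv_left : ∀ x ∈ Ico l r, Tinv (T x) = x
  hinv_right : ∀ x ∈ Ico l r, T (Tinv x) = x
  hinvmaps : MapsTo Tinv (Ico l r) (Ico l r)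
  himg_mono : StrictMono fun k : Fin s => γ (Fin.castSucc (π.symm k)) + α (π.symm k)

namespace IET

variable {s : ℕ} (X : IET s)

/-- The `i`-th exchanged interval `I_i`. -/
def I (i : Fin s) : Set ℝ := Ico (X.γ i.castSucc) (X.γ i.succ)

/-- The separation points `γ_1, …, γ_s` (left boundaries of the `I_i`). -/
def sep (i : Fin s) : ℝ := X.γ i.castSucc

/-- `δ i` : left boundary of the image interval `J_i = T(I_i)`. -/
def δ (i : Fin s) : ℝ := X.γ i.castSucc + X.α i

/-- `ℤ`-iterate of the transformation. -/
def iter (n : ℤ) : ℝ → ℝ := if 0 ≤ n then (X.T)^[n.toNat] else (X.Tinv)^[(-n).toNat]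

/-- The two-sided orbit of a point. -/
def orbit (z : ℝ) : Set ℝ := {y | ∃ n : ℤ, X.iter n z = y}

/-- Minimality: every orbit is dense in `[l, r)`. -/
def Minimal : Prop :=
  ∀ z ∈ Ico X.l X.r, ∀ y ∈ Ico X.l X.r, ∀ ε : ℝ, 0 < ε → ∃ w ∈ X.orbit z, |w - y| < ε

/-- Regularity (Keane's idoc condition): the orbits of the nonzero separation
points are infinite and pairwise disjoint. -/
def Regular : Prop :=
  ∀ i j : Fin s, (i : ℕ) ≠ 0 → (j : ℕ) ≠ 0 → ∀ m n : ℤ,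
    X.iter m (X.sep i) = X.iter n (X.sep j) → i = j ∧ m = n

/-- `I_w` : the set of points whose natural coding begins with the word `w`. -/
def Iw (X : IET s) : List (Fin s) → Set ℝ
  | [] => Ico X.l X.r
  | b :: w => X.I b ∩ X.T ⁻¹' (Iw X w)

/-- `J_w = T^{|w|}(I_w)`. -/
def Jw (w : List (Fin s)) : Set ℝ := (X.T)^[w.length] '' X.Iw w

/-- The factor set `F(T)` of the natural codings of `T`. -/
def Fact : Set (List (Fin s)) := {w | (X.Iw w).Nonempty}

/-- First (positive) return time of `z` to the set `J`. -/
noncomputable def retTime (J : Set ℝ) (z : ℝ) : ℕ := sInf {n : ℕ | 0 < n ∧ (X.T)^[n] z ∈ J}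

/-- First return map of `T` on the set `J`. -/
noncomputable def firstReturn (J : Set ℝ) (z : ℝ) : ℝ := (X.T)^[X.retTime J z] z

/-- `ρ⁺_{[u,v),T}(z) = min {n > 0 | T^n z ∈ (u,v)}`. -/
noncomputable def rhoP (u v z : ℝ) : ℕ := sInf {n : ℕ | 0 < n ∧ X.iter n z ∈ Ioo u v}

/-- `ρ⁻_{[u,v),T}(z) = min {n ≥ 0 | T^{-n} z ∈ (u,v)}`. -/
noncomputable def rhoM (u v z : ℝ) : ℕ := sInf {n : ℕ | X.iter (-(n : ℤ)) z ∈ Ioo u v}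

/-- The set of neighbors of `z` with respect to `[u,v)` and `T`. -/
def nbrs (u v z : ℝ) : Set ℝ :=
  {y | ∃ k : ℤ, -(X.rhoM u v z : ℤ) ≤ k ∧ k < (X.rhoP u v z : ℤ) ∧ X.iter k z = y}

/-- The set of division points of `[u,v)` with respect to `T`. -/
def Div (u v : ℝ) : Set ℝ := ⋃ i : Fin s, X.nbrs u v (X.sep i)

/-- A semi-interval `[u,v) ⊆ [l,r)` is admissible for `T` if both of its
endpoints belong to `Div([u,v),T) ∪ {r}`. -/
def Admissible (u v : ℝ) : Prop :=
  X.l ≤ u ∧ u < v ∧ v ≤ X.r ∧ u ∈ X.Div u v ∧ (v ∈ X.Div u v ∨ v = X.r)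

/-- `Y` is (a presentation of) the transformation induced by `X` on `[u,v)`:
its domain is `[u,v)`, it acts as the first return map of `X`, and its
separation points are the division points of `[u,v)` inside `[u,v)`. -/
def InducedOn (Y : IET s) (u v : ℝ) : Prop :=
  Y.l = u ∧ Y.r = v ∧ (∀ z ∈ Ico u v, Y.T z = X.firstReturn (Ico u v) z) ∧
    {y | ∃ i : Fin s, Y.sep i = y} = X.Div u v ∩ Ico u v

end IET


section Aux
variable {s : ℕ} (X : _root_.IET s)
namespace IET

/-- Every point of `[l,r)` lies in some exchanged interval. -/
lemma exists_piece {x : ℝ} (hx : x ∈ Ico X.l X.r) :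
    ∃ i : Fin s, x ∈ Ico (X.γ i.castSucc) (X.γ i.succ) := by
  classical
  set F : Finset (Fin (s + 1)) := Finset.univ.filter (fun j => X.γ j ≤ x) with hF
  have h0 : (0 : Fin (s+1)) ∈ F := by
    simp [hF, X.γ_first, hx.1]
  have hne : F.Nonempty := ⟨0, h0⟩
  set k := F.max' hne with hk
  have hkmem : k ∈ F := F.max'_mem hne
  have hkle : X.γ k ≤ x := by simpa [hF] using hkmem
  have hklast : k ≠ Fin.last s := by
    intro h
    rw [h, X.γ_last] at hkle
    exact absurd hx.2 (not_lt.2 hkle)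
  have hks : (k : ℕ) < s := by
    have := Fin.lt_last_iff_ne_last.2 hklast
    exact this
  refine ⟨⟨k, hks⟩, ?_, ?_⟩
  · simpa [Fin.castSucc, Fin.ext_iff] using hkle
  · by_contra h
    push_neg at h
    have hmem : (⟨(k : ℕ) + 1, Nat.succ_lt_succ hks⟩ : Fin (s+1)) ∈ F := by
      simpa [hF] using h
    have := F.le_max' _ hmem
    rw [← hk] at this
    have : ((k : ℕ) + 1) ≤ (k : ℕ) := this
    omega

lemma T_sub_mem {x : ℝ} (hx : x ∈ Ico X.l X.r) :
    X.T x - x ∈ Finset.image X.α Finset.univ := by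
  obtain ⟨i, hi⟩ := X.exists_piece hx
  have := X.hT i x hi
  simp [this]

/-- Possible displacements after `n` iterations. -/
noncomputable def Ssum (n : ℕ) : Finset ℝ :=
  Nat.rec {0} (fun _ S => Finset.image₂ (· + ·) (Finset.image X.α Finset.univ) S) n

@[simp] lemma Ssum_zero : X.Ssum 0 = {0} := rfl

@[simp] lemma Ssum_succ (n : ℕ) :
    X.Ssum (n + 1) = Finset.image₂ (· + ·) (Finset.image X.α Finset.univ) (X.Ssum n) := rfl

lemma iter_mem {z : ℝ} (hz : z ∈ Ico X.l X.r) (n : ℕ) : (X.T)^[n] z ∈ Ico X.l X.r :=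
  X.hmaps.iterate n hz

lemma disp_mem {z : ℝ} (hz : z ∈ Ico X.l X.r) (n : ℕ) :
    (X.T)^[n] z - z ∈ X.Ssum n := by
  induction n with
  | zero => simp
  | succ n ih =>
    have h1 : (X.T)^[n+1] z - z = (X.T ((X.T)^[n] z) - (X.T)^[n] z) + ((X.T)^[n] z - z) := by
      rw [Function.iterate_succ_apply']; ring
    rw [h1]
    exact Finset.mem_image₂_of_mem (X.T_sub_mem (X.iter_mem hz n)) ih

/-- A minimal IET has no periodic points. -/
lemma no_periodic (hmin : X.Minimal) {z : ℝ} (hz : z ∈ Ico X.l X.r) {n : ℕ}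
    (hn : 0 < n) (hper : (X.T)^[n] z = z) : False := by
  classical
  set F : Finset ℝ := (Finset.range n).image (fun k => (X.T)^[k] z) with hFdef
  have hzF : z ∈ F := by
    refine Finset.mem_image.2 ⟨0, Finset.mem_range.2 hn, by simp⟩
  -- forward iterates are in F
  have hfwd : ∀ j : ℕ, (X.T)^[j] z ∈ F := by
    intro j
    have hp : Function.IsPeriodicPt X.T n z := hper
    have := hp.iterate_mod_apply j
    rw [← this]
    exact Finset.mem_image.2 ⟨j % n, Finset.mem_range.2 (Nat.mod_lt _ hn), rfl⟩
  -- backward iterates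
  have hbwd : ∀ j : ℕ, ∃ k < n, (X.Tinv)^[j] z = (X.T)^[k] z := by
    intro j
    induction j with
    | zero => exact ⟨0, hn, rfl⟩
    | succ j ih =>
      obtain ⟨k, hk, hkeq⟩ := ih
      rw [Function.iterate_succ_apply', hkeq]
      rcases Nat.eq_zero_or_pos k with hk0 | hkpos
      · subst hk0
        refine ⟨n - 1, by omega, ?_⟩
        have h2 : X.T^[n-1+1] z = X.T (X.T^[n-1] z) := Function.iterate_succ_apply' _ _ _
        have h3 : n - 1 + 1 = n := by omega
        have h1 : (X.T)^[0] z = X.T ((X.T)^[n-1] z) := by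
          rw [← h2, h3, hper, Function.iterate_zero_apply]
        rw [h1, X.hinv_left _ (X.iter_mem hz (n-1))]
      · obtain ⟨k', rfl⟩ : ∃ k', k = k' + 1 := ⟨k - 1, by omega⟩
        refine ⟨k', by omega, ?_⟩
        rw [Function.iterate_succ_apply', X.hinv_left _ (X.iter_mem hz k')]
  have horb : X.orbit z ⊆ (F : Set ℝ) := by
    rintro y ⟨m, rfl⟩
    unfold IET.iter
    split
    · exact hfwd _
    · obtain ⟨k, hk, hkeq⟩ := hbwd (-m).toNat
      rw [hkeq]; exact hfwd k
  -- pick a point of [l,r) outside F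
  obtain ⟨y, hy, hyF⟩ := (Set.Ico_infinite X.hlr).exists_notMem_finset F
  set G : Finset ℝ := F.image (fun w => |w - y|) with hGdef
  have hGne : G.Nonempty := ⟨|z - y|, Finset.mem_image.2 ⟨z, hzF, rfl⟩⟩
  set ε := G.min' hGne with hε
  have hεpos : 0 < ε := by
    have := G.min'_mem hGne
    rw [← hε] at this
    obtain ⟨w, hw, hweq⟩ := Finset.mem_image.1 this
    rw [← hweq]
    have hne : w ≠ y := fun h => hyF (h ▸ hw)
    exact abs_pos.2 (sub_ne_zero.2 hne)
  obtain ⟨w, hw, hwy⟩ := hmin z hz y hy ε hεpos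
  have : ε ≤ |w - y| :=
    G.min'_le _ (Finset.mem_image.2 ⟨w, horb hw, rfl⟩)
  linarith

end IET
end Aux

/-- for a minimal interval exchange transformation, points that
return `ε`-close to themselves need at least `N` iterations once `ε` is small. -/
theorem iet_close_return_implies_long_time {s : ℕ} (X : IET s) (hmin : X.Minimal) :
    ∀ N : ℕ, 0 < N → ∃ ε : ℝ, 0 < ε ∧
      ∀ z ∈ Set.Ico X.l X.r, ∀ n : ℕ, 0 < n → |(X.T)^[n] z - z| < ε → N ≤ n := by
  classical
  intro N hN
  set B : Finset ℝ := (Finset.Ico 1 N).biUnion (fun n => X.Ssum n) with hB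
  set C : Finset ℝ := insert (1:ℝ) ((B.image abs).filter (fun t => 0 < t)) with hC
  have hCne : C.Nonempty := ⟨1, Finset.mem_insert_self _ _⟩
  refine ⟨C.min' hCne, ?_, ?_⟩
  · have hmem := C.min'_mem hCne
    rcases Finset.mem_insert.1 hmem with h | h
    · rw [h]; norm_num
    · exact (Finset.mem_filter.1 h).2
  · intro z hz n hn hclose
    by_contra hlt
    push_neg at hlt
    set d := (X.T)^[n] z - z with hd
    have hdB : d ∈ B := Finset.mem_biUnion.2 ⟨n, Finset.mem_Ico.2 ⟨hn, hlt⟩, X.disp_mem hz n⟩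
    rcases eq_or_ne d 0 with h0 | h0
    · have : (X.T)^[n] z = z := by rw [← sub_eq_zero]; exact h0
      exact X.no_periodic hmin hz hn this
    · have habs : |d| ∈ C :=
        Finset.mem_insert_of_mem (Finset.mem_filter.2
          ⟨Finset.mem_image.2 ⟨d, hdB, rfl⟩, abs_pos.2 h0⟩)
      have := C.min'_le _ habs
      linarith
end

section
/- Let T be a regular s-interval exchange transformation on [ℓ,r). For any k ≥ 1, the set P_k = {T^h(γ_i) : 1 ≤ i ≤ s, 1 ≤ h ≤ k} equals the set of left boundaries of the intervals J_y = T^{|y|}(I_y) over all words y of length k with I_y nonempty, and P_k has exactly (s−1)k + 1 elements. -/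
open Set

namespace IET

variable {s : ℕ} (X : IET s)

include X in
lemma s_pos : 1 ≤ s := by
  rcases Nat.eq_zero_or_pos s with h | h
  · subst h
    have h2 := X.hlr
    rw [← X.γ_first, ← X.γ_last, Fin.last_zero] at h2
    exact absurd h2 (lt_irrefl _)
  · exact h

/-- the least element of `Fin s` -/
def bot0 (Y : IET s) : Fin s := ⟨0, Y.s_pos⟩

lemma sep_bot : X.sep X.bot0 = X.l := by
  have : (Fin.castSucc X.bot0) = 0 := by ext; simp [bot0]
  rw [sep, this, X.γ_first]

lemma I_subset (i : Fin s) : X.I i ⊆ Ico X.l X.r := by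
  intro x hx
  obtain ⟨h1, h2⟩ := hx
  constructor
  · calc X.l = X.γ 0 := X.γ_first.symm
      _ ≤ X.γ i.castSucc := X.γ_mono.monotone (Fin.zero_le _)
      _ ≤ x := h1
  · calc x < X.γ i.succ := h2
      _ ≤ X.γ (Fin.last s) := X.γ_mono.monotone (Fin.le_last _)
      _ = X.r := X.γ_last

lemma sep_mem_I (i : Fin s) : X.sep i ∈ X.I i :=
  ⟨le_refl _, X.γ_mono (Fin.castSucc_lt_succ (i := i))⟩

lemma sep_mem (i : Fin s) : X.sep i ∈ Ico X.l X.r := X.I_subset i (X.sep_mem_I i)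

lemma T_sep (i : Fin s) : X.T (X.sep i) = X.δ i := X.hT i _ (X.sep_mem_I i)

/-- every point of `[l,r)` lies in some `I i`. -/
lemma exists_mem_I {x : ℝ} (hx : x ∈ Ico X.l X.r) : ∃ i : Fin s, x ∈ X.I i := by
  classical
  set F : Finset (Fin (s+1)) := Finset.univ.filter (fun j => X.γ j ≤ x) with hF
  have h0 : (0 : Fin (s+1)) ∈ F := by
    simp [hF, X.γ_first, hx.1]
  have hne : F.Nonempty := ⟨0, h0⟩
  set j := F.max' hne with hj
  have hjF : j ∈ F := F.max'_mem hne
  have hγj : X.γ j ≤ x := by simpa [hF] using hjF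
  have hjlt : (j : ℕ) < s := by
    by_contra hc
    push_neg at hc
    have : j = Fin.last s := by
      apply Fin.ext
      simpa using le_antisymm (Nat.lt_succ_iff.mp j.isLt) hc
    rw [this, X.γ_last] at hγj
    exact absurd hx.2 (not_lt.mpr hγj)
  refine ⟨⟨j, hjlt⟩, hγj, ?_⟩
  by_contra hc
  push_neg at hc
  have hmem : ((⟨(j : ℕ)+1, Nat.succ_lt_succ hjlt⟩ : Fin (s+1))) ∈ F := by
    simp only [hF, Finset.mem_filter, Finset.mem_univ, true_and]
    rw [← Fin.succ_mk]
    exact hc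
  have hle := F.le_max' _ hmem
  rw [← hj] at hle
  have : (j : ℕ) + 1 ≤ (j : ℕ) := by
    simpa [Fin.le_def, Fin.val_succ] using hle
  omega

lemma iterT_maps (n : ℕ) : MapsTo X.T^[n] (Ico X.l X.r) (Ico X.l X.r) :=
  X.hmaps.iterate n

lemma iter_eq_iterate (n : ℕ) (z : ℝ) : X.iter (n : ℤ) z = X.T^[n] z := by
  simp [iter]

/-- regularity for nonnegative iterates -/
lemma reg_nat (hreg : X.Regular) {i j : Fin s} (hi : (i : ℕ) ≠ 0) (hj : (j : ℕ) ≠ 0)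
    {m n : ℕ} (h : X.T^[m] (X.sep i) = X.T^[n] (X.sep j)) : i = j ∧ m = n := by
  have := hreg i j hi hj m n (by rw [X.iter_eq_iterate, X.iter_eq_iterate]; exact h)
  exact ⟨this.1, by exact_mod_cast this.2⟩

/-- the index whose image interval is leftmost -/
lemma delta_min (i : Fin s) : X.δ (X.π.symm X.bot0) ≤ X.δ i := by
  have h := X.himg_mono.monotone (show X.bot0 ≤ X.π i from by
    rw [Fin.le_def]; simp [bot0])
  simpa [δ, Equiv.symm_apply_apply] using h

lemma delta_j0 : X.δ (X.π.symm X.bot0) = X.l := by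
  have hl : X.l ∈ Ico X.l X.r := ⟨le_refl _, X.hlr⟩
  have hTi := X.hinvmaps hl
  obtain ⟨i, hi⟩ := X.exists_mem_I hTi
  have hTl : X.T (X.Tinv X.l) = X.l := X.hinv_right _ hl
  have h1 : X.Tinv X.l + X.α i = X.l := by rw [← X.hT i _ hi]; exact hTl
  have h2 : X.δ i ≤ X.l := by
    rw [← h1]
    exact (add_le_add_iff_right _).mpr hi.1
  refine le_antisymm (le_trans (X.delta_min i) h2) ?_
  have hmem : X.T (X.sep (X.π.symm X.bot0)) ∈ Ico X.l X.r := X.hmaps (X.sep_mem _)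
  rw [X.T_sep] at hmem
  exact hmem.1

lemma Iw_subset (w : List (Fin s)) : X.Iw w ⊆ Ico X.l X.r := by
  cases w with
  | nil => exact subset_rfl
  | cons b w => exact fun x hx => X.I_subset b hx.1

lemma Iw_append (y z : List (Fin s)) :
    X.Iw (y ++ z) = X.Iw y ∩ (X.T^[y.length]) ⁻¹' (X.Iw z) := by
  induction y with
  | nil =>
    simp only [List.nil_append, List.length_nil, Function.iterate_zero, Set.preimage_id, Iw]
    exact (inter_eq_self_of_subset_right (X.Iw_subset z)).symm
  | cons b y ih =>
    show X.I b ∩ X.T ⁻¹' (X.Iw (y ++ z)) = _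
    rw [ih, Set.preimage_inter, ← inter_assoc]
    congr 1

lemma Iw_singleton (a : Fin s) : X.Iw [a] = X.I a := by
  show X.I a ∩ X.T ⁻¹' (X.Iw []) = X.I a
  apply inter_eq_self_of_subset_left
  intro x hx
  exact X.hmaps (X.I_subset a hx)

lemma Jw_concat (y : List (Fin s)) (a : Fin s) :
    X.Jw (y ++ [a]) = X.T '' (X.Jw y ∩ X.I a) := by
  have h1 : X.Iw (y ++ [a]) = X.Iw y ∩ (X.T^[y.length]) ⁻¹' (X.I a) := by
    rw [X.Iw_append, X.Iw_singleton]
  rw [Jw, h1, List.length_append, List.length_singleton,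
    Function.iterate_succ', Set.image_comp, Set.image_inter_preimage]
  rfl

/-- translation formula for images of Ico inside an exchanged interval -/
lemma T_image_Ico {a : Fin s} {u v : ℝ} (h : Ico u v ⊆ X.I a) :
    X.T '' Ico u v = Ico (u + X.α a) (v + X.α a) := by
  have : X.T '' Ico u v = (fun x => x + X.α a) '' Ico u v := by
    apply Set.image_congr
    intro x hx
    exact X.hT a x (h hx)
  rw [this, Set.image_add_const_Ico]

end IET


namespace IET

variable {s : ℕ} (X : IET s)

lemma Ico_left_eq {a b c d : ℝ} (h : Ico a b = Ico c d) (hab : a < b) : a = c := by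
  have ha : a ∈ Ico c d := h ▸ (⟨le_rfl, hab⟩ : a ∈ Ico a b)
  have hc : c ∈ Ico a b := by
    rw [h]; exact ⟨le_rfl, lt_of_le_of_lt ha.1 ha.2⟩
  exact le_antisymm hc.1 ha.1

lemma Jw_nonempty {w : List (Fin s)} (h : (X.Iw w).Nonempty) : (X.Jw w).Nonempty :=
  h.image _

lemma Iw_nonempty {w : List (Fin s)} (h : (X.Jw w).Nonempty) : (X.Iw w).Nonempty :=
  Set.image_nonempty.mp h

lemma Jw_singleton (a : Fin s) :
    X.Jw [a] = Ico (X.γ a.castSucc + X.α a) (X.γ a.succ + X.α a) := by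
  rw [Jw, List.length_singleton, Function.iterate_one, X.Iw_singleton]
  exact X.T_image_Ico subset_rfl

lemma Jw_concat_Ico {y : List (Fin s)} {a : Fin s} {u v : ℝ} (hJ : X.Jw y = Ico u v) :
    X.Jw (y ++ [a]) =
      Ico (max u (X.sep a) + X.α a) (min v (X.γ a.succ) + X.α a) := by
  rw [X.Jw_concat, hJ, I, Set.Ico_inter_Ico]
  exact X.T_image_Ico (Set.Ico_subset_Ico (le_max_right _ _) (min_le_right _ _))

/-- the main induction: left endpoints of level-`k` intervals are `P_k`,
the level-`k` intervals cover `[l,r)`, and each is a half-open interval. -/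
lemma main_inv (k : ℕ) (hk : 1 ≤ k) :
    ({x : ℝ | ∃ i : Fin s, ∃ h : ℕ, 1 ≤ h ∧ h ≤ k ∧ (X.T)^[h] (X.sep i) = x} =
      {x : ℝ | ∃ y : List (Fin s), y.length = k ∧ (X.Iw y).Nonempty ∧
        ∃ v : ℝ, x < v ∧ X.Jw y = Set.Ico x v}) ∧
    (∀ x ∈ Ico X.l X.r, ∃ y : List (Fin s), y.length = k ∧ x ∈ X.Jw y) ∧
    (∀ y : List (Fin s), y.length = k → (X.Iw y).Nonempty →
      ∃ u v : ℝ, u < v ∧ X.Jw y = Ico u v) := by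
  induction k, hk using Nat.le_induction with
  | base =>
    refine ⟨?_, ?_, ?_⟩
    · ext x
      simp only [Set.mem_setOf_eq]
      constructor
      · rintro ⟨i, h, h1, h2, hx⟩
        have hh : h = 1 := le_antisymm h2 h1
        subst hh
        rw [Function.iterate_one, X.T_sep] at hx
        refine ⟨[i], rfl, ⟨X.sep i, by rw [X.Iw_singleton]; exact X.sep_mem_I i⟩,
          X.γ i.succ + X.α i, ?_, ?_⟩
        · rw [← hx]
          exact (add_lt_add_iff_right _).mpr (X.γ_mono (Fin.castSucc_lt_succ (i := i)))
        · rw [X.Jw_singleton i, ← hx]; rfl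
      · rintro ⟨y, hlen, hne, v, hxv, hJ⟩
        obtain ⟨a, rfl⟩ := List.length_eq_one_iff.mp hlen
        have h1 := X.Jw_singleton a
        rw [hJ] at h1
        have hlt : X.γ a.castSucc + X.α a < X.γ a.succ + X.α a :=
          (add_lt_add_iff_right _).mpr (X.γ_mono (Fin.castSucc_lt_succ (i := a)))
        have := IET.Ico_left_eq h1 hxv
        exact ⟨a, 1, le_rfl, le_rfl, by rw [Function.iterate_one, X.T_sep, δ, this]⟩
    · intro x hx
      obtain ⟨a, ha⟩ := X.exists_mem_I (X.hinvmaps hx)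
      refine ⟨[a], rfl, ⟨X.Tinv x, ?_, ?_⟩⟩
      · rw [X.Iw_singleton]; exact ha
      · rw [List.length_singleton, Function.iterate_one]
        exact X.hinv_right x hx
    · intro y hlen _
      obtain ⟨a, rfl⟩ := List.length_eq_one_iff.mp hlen
      exact ⟨_, _, (add_lt_add_iff_right (X.α a)).mpr (X.γ_mono (Fin.castSucc_lt_succ (i := a))),
        X.Jw_singleton a⟩
  | succ k hk ih =>
    obtain ⟨hset, hcov, hico⟩ := ih
    -- helper: if q ∈ [l,r), x = T q, and q is the left endpoint of J_y ∩ I_a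
    have key : ∀ q ∈ Ico X.l X.r, ∀ y : List (Fin s), y.length = k →
        ∀ u v : ℝ, X.Jw y = Ico u v → q ∈ Ico u v → ∀ a : Fin s, q ∈ X.I a →
        max u (X.sep a) = q →
        ∃ y' : List (Fin s), y'.length = k + 1 ∧ (X.Iw y').Nonempty ∧
          ∃ v' : ℝ, X.T q < v' ∧ X.Jw y' = Ico (X.T q) v' := by
      intro q hq y hlen u v hJ hqJ a hqa hmax
      have hTq : X.T q = q + X.α a := X.hT a q hqa
      have hJ' := X.Jw_concat_Ico (a := a) hJ
      rw [hmax] at hJ'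
      have hqM : q < min v (X.γ a.succ) := lt_min hqJ.2 hqa.2
      refine ⟨y ++ [a], by simp [hlen], ?_, min v (X.γ a.succ) + X.α a, ?_, ?_⟩
      · apply X.Iw_nonempty
        rw [hJ']
        exact Set.nonempty_Ico.mpr ((add_lt_add_iff_right _).mpr hqM)
      · rw [hTq]; exact (add_lt_add_iff_right _).mpr hqM
      · rw [hJ', hTq]
    refine ⟨?_, ?_, ?_⟩
    · ext x
      simp only [Set.mem_setOf_eq]
      constructor
      · rintro ⟨i, h, h1, h2, hx⟩
        -- write x = T q with q = sep i (h = 1) or q ∈ P_k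
        rcases Nat.lt_or_ge 1 h with hgt | hle
        · -- h = h' + 1 with 1 ≤ h' ≤ k, q = T^[h'] (sep i) ∈ P_k
          obtain ⟨h', rfl⟩ : ∃ h', h = h' + 1 := ⟨h - 1, by omega⟩
          set q := X.T^[h'] (X.sep i) with hqdef
          have hq : q ∈ Ico X.l X.r := X.iterT_maps h' (X.sep_mem i)
          have hqP : q ∈ {x : ℝ | ∃ i : Fin s, ∃ h : ℕ, 1 ≤ h ∧ h ≤ k ∧
              (X.T)^[h] (X.sep i) = x} := ⟨i, h', by omega, by omega, rfl⟩
          rw [hset] at hqP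
          obtain ⟨y, hlen, hne, v, hqv, hJ⟩ := hqP
          obtain ⟨a, hqa⟩ := X.exists_mem_I hq
          have hx' : x = X.T q := by
            rw [← hx, Function.iterate_succ_apply']
          rw [hx']
          exact key q hq y hlen q v hJ ⟨le_rfl, hqv⟩ a hqa (max_eq_left hqa.1)
        · -- h = 1, q = sep i
          have hh : h = 1 := le_antisymm hle h1
          subst hh
          set q := X.sep i with hqdef
          have hq : q ∈ Ico X.l X.r := X.sep_mem i
          obtain ⟨y, hlen, hqJ⟩ := hcov q hq
          have hne : (X.Iw y).Nonempty := X.Iw_nonempty ⟨q, hqJ⟩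
          obtain ⟨u, v, huv, hJ⟩ := hico y hlen hne
          rw [hJ] at hqJ
          have hx' : x = X.T q := by rw [← hx, Function.iterate_one]
          rw [hx']
          exact key q hq y hlen u v hJ hqJ i (X.sep_mem_I i) (max_eq_right hqJ.1)
      · rintro ⟨y', hlen, hne, v', hxv', hJ'⟩
        obtain rfl | ⟨y, a, rfl⟩ := y'.eq_nil_or_concat
        · simp at hlen
        rw [List.concat_eq_append] at *
        have hlY : y.length = k := by
          rw [List.length_append, List.length_singleton] at hlen; omega
        have hneY : (X.Iw y).Nonempty := by
          obtain ⟨z, hz⟩ := hne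
          rw [X.Iw_append] at hz
          exact ⟨z, hz.1⟩
        obtain ⟨u, v, huv, hJ⟩ := hico y hlY hneY
        have hJc := X.Jw_concat_Ico (a := a) hJ
        rw [hJ'] at hJc
        have hx : x = max u (X.sep a) + X.α a := IET.Ico_left_eq hJc hxv'
        have hmM : max u (X.sep a) + X.α a < min v (X.γ a.succ) + X.α a := by
          have : x ∈ X.Jw (y ++ [a]) := hJ' ▸ ⟨le_rfl, hxv'⟩
          rw [X.Jw_concat_Ico (a := a) hJ] at this
          exact lt_of_le_of_lt this.1 this.2
        have hmI : max u (X.sep a) ∈ X.I a := by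
          have hmlt : max u (X.sep a) < min v (X.γ a.succ) := by
            exact lt_of_add_lt_add_right hmM
          exact ⟨le_max_right _ _, lt_of_lt_of_le hmlt (min_le_right _ _)⟩
        have hT : X.T (max u (X.sep a)) = x := by
          rw [X.hT a _ hmI, hx]
        rcases max_cases u (X.sep a) with ⟨hm, hus⟩ | ⟨hm, hus⟩
        · -- left endpoint is u, which lies in P_k
          have huP : u ∈ {x : ℝ | ∃ i : Fin s, ∃ h : ℕ, 1 ≤ h ∧ h ≤ k ∧
              (X.T)^[h] (X.sep i) = x} := by
            rw [hset]
            exact ⟨y, hlY, hneY, v, huv, hJ⟩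
          obtain ⟨i, h, h1, h2, hu⟩ := huP
          refine ⟨i, h + 1, by omega, by omega, ?_⟩
          rw [Function.iterate_succ_apply', hu, ← hm, hT]
        · -- left endpoint is sep a
          refine ⟨a, 1, le_rfl, by omega, ?_⟩
          rw [Function.iterate_one, ← hm, hT]
    · -- covering
      intro x hx
      have hq : X.Tinv x ∈ Ico X.l X.r := X.hinvmaps hx
      obtain ⟨y, hlen, hqJ⟩ := hcov _ hq
      obtain ⟨a, hqa⟩ := X.exists_mem_I hq
      refine ⟨y ++ [a], by simp [hlen], ?_⟩
      rw [X.Jw_concat]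
      exact ⟨X.Tinv x, ⟨hqJ, hqa⟩, X.hinv_right x hx⟩
    · -- each nonempty level-(k+1) set is an Ico
      intro y' hlen hne
      obtain rfl | ⟨y, a, rfl⟩ := y'.eq_nil_or_concat
      · simp at hlen
      rw [List.concat_eq_append] at *
      have hlY : y.length = k := by
        rw [List.length_append, List.length_singleton] at hlen; omega
      have hneY : (X.Iw y).Nonempty := by
        obtain ⟨z, hz⟩ := hne
        rw [X.Iw_append] at hz
        exact ⟨z, hz.1⟩
      obtain ⟨u, v, huv, hJ⟩ := hico y hlY hneY
      have hJc := X.Jw_concat_Ico (a := a) hJ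
      have hne' : (X.Jw (y ++ [a])).Nonempty := X.Jw_nonempty hne
      rw [hJc] at hne'
      exact ⟨_, _, Set.nonempty_Ico.mp hne', hJc⟩

end IET


namespace IET

variable {s : ℕ} (X : IET s)

lemma T_sep_j0 : X.T (X.sep (X.π.symm X.bot0)) = X.l := by
  rw [X.T_sep, X.delta_j0]

lemma Tinv_fix (hfix : X.T X.l = X.l) : X.Tinv X.l = X.l := by
  conv_lhs => rw [← hfix]
  exact X.hinv_left X.l ⟨le_rfl, X.hlr⟩

lemma no_return (hfix : X.T X.l = X.l) {i : Fin s} (hi : (i : ℕ) ≠ 0) :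
    ∀ h : ℕ, X.T^[h] (X.sep i) ≠ X.l := by
  intro h
  induction h with
  | zero =>
    intro hc
    simp only [Function.iterate_zero, id] at hc
    rw [← X.γ_first] at hc
    have := X.γ_mono.injective hc
    apply hi
    have : ((i.castSucc : Fin (s+1)) : ℕ) = 0 := by rw [this]; rfl
    simpa using this
  | succ h ih =>
    intro hc
    rw [Function.iterate_succ_apply'] at hc
    have hz : X.T^[h] (X.sep i) ∈ Ico X.l X.r := X.iterT_maps h (X.sep_mem i)
    have : X.T^[h] (X.sep i) = X.Tinv X.l := by
      rw [← hc, X.hinv_left _ hz]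
    rw [X.Tinv_fix hfix] at this
    exact ih this

lemma count_P (hreg : X.Regular) (k : ℕ) (hk : 1 ≤ k) :
    {x : ℝ | ∃ i : Fin s, ∃ h : ℕ, 1 ≤ h ∧ h ≤ k ∧ (X.T)^[h] (X.sep i) = x}.ncard
      = (s - 1) * k + 1 := by
  classical
  set j0 := X.π.symm X.bot0 with hj0
  set F : Fin s × ℕ → ℝ := fun p => X.T^[p.2] (X.sep p.1) with hF
  set E : Finset (Fin s × ℕ) :=
    ((Finset.univ.filter (fun i : Fin s => (i : ℕ) ≠ 0)) ×ˢ Finset.Icc 1 k)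
      ∪ {(j0, k + 1)} with hE
  have hextra : (j0, k + 1) ∉
      (Finset.univ.filter (fun i : Fin s => (i : ℕ) ≠ 0)) ×ˢ Finset.Icc 1 k := by
    intro hc
    rw [Finset.mem_product] at hc
    rcases Nat.eq_zero_or_pos (j0 : ℕ) with h0 | h0
    · have := hc.1
      rw [Finset.mem_filter] at this
      exact this.2 h0
    · have := hc.2
      rw [Finset.mem_Icc] at this
      omega
  have hmemp : ∀ (i : Fin s) (h : ℕ), (i : ℕ) ≠ 0 → 1 ≤ h → h ≤ k →
      ((i, h) : Fin s × ℕ) ∈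
        (Finset.univ.filter (fun i : Fin s => (i : ℕ) ≠ 0)) ×ˢ Finset.Icc 1 k := by
    intro i h h0 h1 h2
    rw [Finset.mem_product]
    exact ⟨Finset.mem_filter.mpr ⟨Finset.mem_univ _, h0⟩, Finset.mem_Icc.mpr ⟨h1, h2⟩⟩
  -- the set is the image of E under F
  have hPE : {x : ℝ | ∃ i : Fin s, ∃ h : ℕ, 1 ≤ h ∧ h ≤ k ∧ (X.T)^[h] (X.sep i) = x}
      = ↑(E.image F) := by
    ext x
    simp only [Set.mem_setOf_eq, Finset.coe_image, Set.mem_image, Finset.mem_coe]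
    constructor
    · rintro ⟨i, h, h1, h2, hx⟩
      rcases Nat.eq_zero_or_pos (i : ℕ) with h0 | h0
      · -- i = bot0 : sep i = l = T (sep j0)
        have hi0 : i = X.bot0 := by apply Fin.ext; simpa [bot0] using h0
        have hsep : X.sep i = X.T (X.sep j0) := by rw [hi0, X.sep_bot, X.T_sep_j0]
        have hx' : X.T^[h + 1] (X.sep j0) = x := by
          rw [Function.iterate_succ_apply, ← hsep, hx]
        rcases Nat.eq_zero_or_pos (j0 : ℕ) with hj | hj
        · -- T fixes l, so x = l = F (j0, k+1)
          have hj0b : j0 = X.bot0 := by apply Fin.ext; simpa [bot0] using hj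
          have hfix : X.T X.l = X.l := by
            conv_lhs => rw [← X.sep_bot, ← hj0b, X.T_sep_j0]
          have hxl : x = X.l := by
            rw [← hx, hi0, X.sep_bot, Function.iterate_fixed hfix]
          refine ⟨(j0, k + 1), Finset.mem_union_right _ (Finset.mem_singleton_self _), ?_⟩
          show X.T^[k + 1] (X.sep j0) = x
          rw [hj0b, X.sep_bot, Function.iterate_fixed hfix, hxl]
        · rcases Nat.lt_or_ge (h + 1) (k + 1) with hlt | hge
          · exact ⟨(j0, h + 1), Finset.mem_union_left _
              (hmemp _ _ (by omega) (by omega) (by omega)), hx'⟩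
          · have hhk : h = k := by omega
            exact ⟨(j0, h + 1), Finset.mem_union_right _
              (by rw [hhk]; exact Finset.mem_singleton_self _), hx'⟩
      · exact ⟨(i, h), Finset.mem_union_left _
          (hmemp _ _ (by omega) (by omega) (by omega)), hx⟩
    · rintro ⟨⟨i, h⟩, hmem, hx⟩
      rw [hE, Finset.mem_union] at hmem
      rcases hmem with hmem | hmem
      · rw [Finset.mem_product, Finset.mem_Icc] at hmem
        exact ⟨i, h, hmem.2.1, hmem.2.2, hx⟩
      · rw [Finset.mem_singleton, Prod.mk.injEq] at hmem
        obtain ⟨rfl, rfl⟩ := hmem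
        refine ⟨X.bot0, k, hk, le_rfl, ?_⟩
        show X.T^[k] (X.sep X.bot0) = x
        rw [X.sep_bot, ← X.T_sep_j0, ← Function.iterate_succ_apply]
        exact hx
  have hP : ∀ p : Fin s × ℕ, p ∈ E → ((p.1 : ℕ) ≠ 0 ∧ 1 ≤ p.2 ∧ p.2 ≤ k) ∨ p = (j0, k + 1) := by
    intro p hp
    rw [hE, Finset.mem_union] at hp
    rcases hp with hp | hp
    · left
      rw [Finset.mem_product, Finset.mem_filter, Finset.mem_Icc] at hp
      exact ⟨hp.1.2, hp.2.1, hp.2.2⟩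
    · right; exact Finset.mem_singleton.mp hp
  have hcase : ∀ (i : Fin s) (h : ℕ), (i : ℕ) ≠ 0 → 1 ≤ h → h ≤ k →
      F (i, h) ≠ F (j0, k + 1) := by
    intro i h hi0 h1 h2 hfe
    rcases Nat.eq_zero_or_pos (j0 : ℕ) with hj | hj
    · have hj0b : j0 = X.bot0 := Fin.ext (by simpa [bot0] using hj)
      have hfix : X.T X.l = X.l := by
        conv_lhs => rw [← X.sep_bot, ← hj0b, X.T_sep_j0]
      have hFl : F (j0, k + 1) = X.l := by
        show X.T^[k + 1] (X.sep j0) = X.l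
        rw [hj0b, X.sep_bot, Function.iterate_fixed hfix]
      rw [hFl] at hfe
      exact X.no_return hfix hi0 h hfe
    · obtain ⟨-, he⟩ := X.reg_nat hreg hi0 (Nat.pos_iff_ne_zero.mp hj) hfe
      omega
  have hinj : Set.InjOn F ↑E := by
    rintro ⟨i, h⟩ hp ⟨j, g⟩ hq hfeq
    rw [Finset.mem_coe] at hp hq
    rcases hP (i, h) hp with ⟨hp1, hp2, hp3⟩ | heqp
    · rcases hP (j, g) hq with ⟨hq1, hq2, hq3⟩ | heqq
      · obtain ⟨h1, h2⟩ := X.reg_nat hreg hp1 hq1 hfeq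
        rw [Prod.mk.injEq]
        exact ⟨h1, h2⟩
      · rw [Prod.mk.injEq] at heqq
        obtain ⟨rfl, rfl⟩ := heqq
        exact absurd hfeq (hcase _ _ hp1 hp2 hp3)
    · rw [Prod.mk.injEq] at heqp
      obtain ⟨rfl, rfl⟩ := heqp
      rcases hP (j, g) hq with ⟨hq1, hq2, hq3⟩ | heqq
      · exact absurd hfeq.symm (hcase _ _ hq1 hq2 hq3)
      · exact heqq.symm
  rw [hPE, Set.ncard_coe_finset, Finset.card_image_of_injOn hinj, hE,
    Finset.card_union_of_disjoint (by simpa using hextra), Finset.card_product,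
    Nat.card_Icc, Finset.card_singleton]
  congr 1
  have : (Finset.univ.filter (fun i : Fin s => (i : ℕ) ≠ 0)) = Finset.univ.erase X.bot0 := by
    ext i
    simp only [Finset.mem_filter, Finset.mem_univ, true_and, Finset.mem_erase, and_true]
    constructor
    · intro h hc; exact h (by rw [hc]; rfl)
    · intro h hc; exact h (Fin.ext (by simpa [bot0] using hc))
  rw [this, Finset.card_erase_of_mem (Finset.mem_univ _), Finset.card_univ,
    Fintype.card_fin, Nat.add_sub_cancel]

end IET


/-- for a regular `s`-interval exchange transformation and `k ≥ 1`,
the set `P_k = {T^h(γ_i) | 1 ≤ i ≤ s, 1 ≤ h ≤ k}` is exactly the set of left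
boundaries of the intervals `J_y` over words `y` of length `k` occurring in the
codings, and it has `(s-1)k + 1` elements. -/
theorem iet_boundary_lemma {s : ℕ} (X : IET s) (hreg : X.Regular) (k : ℕ) (hk : 1 ≤ k) :
    {x : ℝ | ∃ i : Fin s, ∃ h : ℕ, 1 ≤ h ∧ h ≤ k ∧ (X.T)^[h] (X.sep i) = x} =
      {x : ℝ | ∃ y : List (Fin s), y.length = k ∧ (X.Iw y).Nonempty ∧
        ∃ v : ℝ, x < v ∧ X.Jw y = Set.Ico x v} ∧
    {x : ℝ | ∃ i : Fin s, ∃ h : ℕ, 1 ≤ h ∧ h ≤ k ∧ (X.T)^[h] (X.sep i) = x}.ncard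
      = (s - 1) * k + 1 :=
  ⟨(X.main_inv k hk).1, X.count_P hreg k hk⟩
end
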